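/- Let T > 0, δ ∈ (0,1), p ∈ (1,∞) with δ > 1/p. For continuous paths X¹, X² : [0,T] → E into a normed space (applied componentwise/levelwise), the inhomogeneous Riesz type distance ρ_{V^{δ,p}} and the inhomogeneous mixed Hölder-variation distance ρ_{\tilde V^{δ,p}} are equivalent: there exist constants c, C > 0 depending only on δ, p such that c·ρ_{V^{δ,p}}(X¹,X²) ≤ ρ_{\tilde V^{δ,p}}(X¹,X²) ≤ C·ρ_{V^{δ,p}}(X¹,X²). For the single-level (k=1, Banach space valued) case: for f := X¹ - X², sup_P (Σ_{[u,v]∈P} ‖f‖_{(1/δ)-var;[u,v]}^p/|v-u|^{δp-1})^{1/p} is comparable with (sup_P Σ_{[u,v]∈P} |f_v-f_u|^p/|v-u|^{δp-1})^{1/p}. -/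

import Mathlib

open scoped ENNReal NNReal
open MeasureTheory

/-- `u 0, u 1, ..., u n` are the points of a partition of `[s,t]`. -/
def IsPart (s t : ℝ) (n : ℕ) (u : ℕ → ℝ) : Prop :=
  u 0 = s ∧ u n = t ∧ ∀ i < n, u i < u (i + 1)

/-- Riesz-type sum of `f` along a partition, with parameters `δ, p`. -/
noncomputable def rieszSum {E : Type*} [PseudoEMetricSpace E] (f : ℝ → E) (δ p : ℝ)
    (n : ℕ) (u : ℕ → ℝ) : ℝ≥0∞ :=
  ∑ i ∈ Finset.range n,
    edist (f (u i)) (f (u (i + 1))) ^ p / ENNReal.ofReal (u (i + 1) - u i) ^ (δ * p - 1)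

/-- Riesz type variation seminorm `‖f‖_{V^{δ,p};[s,t]}`. -/
noncomputable def VNorm {E : Type*} [PseudoEMetricSpace E] (f : ℝ → E) (δ p : ℝ)
    (s t : ℝ) : ℝ≥0∞ :=
  (⨆ n, ⨆ u, ⨆ _ : IsPart s t n u, rieszSum f δ p n u) ^ (1 / p)

/-- `q`-variation seminorm `‖f‖_{q-var;[s,t]}`. -/
noncomputable def qVar {E : Type*} [PseudoEMetricSpace E] (f : ℝ → E) (q : ℝ)
    (s t : ℝ) : ℝ≥0∞ :=
  (⨆ n, ⨆ u, ⨆ _ : IsPart s t n u,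
    ∑ i ∈ Finset.range n, edist (f (u i)) (f (u (i + 1))) ^ q) ^ (1 / q)

/-- `δ`-Hölder seminorm on `[s,t]`, i.e. `‖f‖_{V^{δ,∞};[s,t]}`. -/
noncomputable def holNorm {E : Type*} [PseudoEMetricSpace E] (f : ℝ → E) (δ : ℝ)
    (s t : ℝ) : ℝ≥0∞ :=
  ⨆ u, ⨆ v, ⨆ _ : s ≤ u ∧ u < v ∧ v ≤ t,
    edist (f u) (f v) / ENNReal.ofReal (v - u) ^ δ

/-- Nikolskii seminorm `‖f‖_{N^{δ,p};[s,t]}`. -/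
noncomputable def nikNorm {E : Type*} [PseudoEMetricSpace E] (f : ℝ → E) (δ p : ℝ)
    (s t : ℝ) : ℝ≥0∞ :=
  ⨆ h : ℝ, ⨆ _ : 0 < h ∧ h ≤ t - s,
    ENNReal.ofReal h ^ (-δ) *
      (∫⁻ r in Set.Ioc s (t - h), edist (f r) (f (r + h)) ^ p) ^ (1 / p)

/-- Refined Nikolskii seminorm `‖f‖_{\hat N^{δ,p};[s,t]}`. -/
noncomputable def nikHatNorm {E : Type*} [PseudoEMetricSpace E] (f : ℝ → E) (δ p : ℝ)
    (s t : ℝ) : ℝ≥0∞ :=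
  (⨆ n, ⨆ u, ⨆ _ : IsPart s t n u,
    ∑ i ∈ Finset.range n, nikNorm f δ p (u i) (u (i + 1)) ^ p) ^ (1 / p)

/-- Mixed Hölder-variation seminorm `‖f‖_{\tilde V^{δ,p};[s,t]}`. -/
noncomputable def tildeVNorm {E : Type*} [PseudoEMetricSpace E] (f : ℝ → E) (δ p : ℝ)
    (s t : ℝ) : ℝ≥0∞ :=
  (⨆ n, ⨆ u, ⨆ _ : IsPart s t n u,
    ∑ i ∈ Finset.range n,
      qVar f (1 / δ) (u i) (u (i + 1)) ^ p
        / ENNReal.ofReal (u (i + 1) - u i) ^ (δ * p - 1)) ^ (1 / p)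

/-- Fractional Sobolev (Sobolev–Slobodeckij) seminorm `‖f‖_{W^{δ,p};[s,t]}`. -/
noncomputable def sobNorm {E : Type*} [PseudoEMetricSpace E] (f : ℝ → E) (δ p : ℝ)
    (s t : ℝ) : ℝ≥0∞ :=
  (∫⁻ v in Set.Ioc s t, ∫⁻ u in Set.Ioc s t,
    edist (f u) (f v) ^ p / ENNReal.ofReal |v - u| ^ (1 + δ * p)) ^ (1 / p)

/-!
For the path `f = X₁ - X₂` the two distances are in fact equal, so `c = C = 1`.
An increment of `f` over `[u,v]` is bounded by its `1/δ`-variation on `[u,v]`, so the mixed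
sums dominate the Riesz sums termwise. Conversely, with `P = δ p ≥ 1`, Hölder's inequality
weighted by the lengths of the intervals of a partition of `[s,t]` gives
`‖f‖_{1/δ-var;[s,t]}^p ≤ (t - s)^(P - 1) · sup_π Σ |f_v - f_u|^p / |v - u|^(P - 1)`.
Since partitions can be concatenated, this supremum of Riesz sums is superadditive over
adjacent intervals, and summing the bound over a partition gives the reverse inequality.
-/

namespace IsPart

variable {s t : ℝ} {n : ℕ} {u : ℕ → ℝ}

theorem two_point (h : s < t) : IsPart s t 1 (fun i => if i = 0 then s else t) :=
  ⟨rfl, rfl, fun i hi => by rw [Nat.lt_one_iff.1 hi]; simpa using h⟩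

theorem dropLast (h : IsPart s t (n + 1) u) : IsPart s (u n) n u :=
  ⟨h.1, rfl, fun i hi => h.2.2 i (by omega)⟩

theorem le (h : IsPart s t n u) : s ≤ t := by
  induction n generalizing t with
  | zero => exact (h.1.symm.trans h.2.1).le
  | succ n ih => exact (ih h.dropLast).trans ((h.2.2 n n.lt_succ_self).le.trans h.2.1.le)

theorem exists_of_le (h : s ≤ t) : ∃ n u, IsPart s t n u := by
  rcases h.lt_or_eq with h | rfl
  · exact ⟨1, _, two_point h⟩
  · exact ⟨0, fun _ => s, rfl, rfl, fun i hi => absurd hi i.not_lt_zero⟩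

theorem sum_ofReal_sub (h : IsPart s t n u) :
    ∑ i ∈ Finset.range n, ENNReal.ofReal (u (i + 1) - u i) = ENNReal.ofReal (t - s) := by
  have hstep : ∀ i ∈ Finset.range n, 0 ≤ u (i + 1) - u i := fun i hi =>
    sub_nonneg.2 (h.2.2 i (Finset.mem_range.1 hi)).le
  rw [← ENNReal.ofReal_sum_of_nonneg hstep, Finset.sum_range_sub u, h.1, h.2.1]

end IsPart

def partAppend (n : ℕ) (u w : ℕ → ℝ) (i : ℕ) : ℝ :=
  if i ≤ n then u i else w (i - n)

section partAppend

variable {r s t : ℝ} {n m : ℕ} {u w : ℕ → ℝ}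

theorem partAppend_of_le {i : ℕ} (hi : i ≤ n) : partAppend n u w i = u i := if_pos hi

theorem partAppend_add (h : u n = w 0) (i : ℕ) : partAppend n u w (n + i) = w i := by
  rcases i with _ | i
  · simpa [partAppend] using h
  · simp [partAppend]

theorem IsPart.append (hu : IsPart r s n u) (hw : IsPart s t m w) :
    IsPart r t (n + m) (partAppend n u w) := by
  have hjoin : u n = w 0 := hu.2.1.trans hw.1.symm
  refine ⟨(partAppend_of_le n.zero_le).trans hu.1, (partAppend_add hjoin m).trans hw.2.1,
    fun i hi => ?_⟩
  rcases lt_or_ge i n with hin | hni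
  · rw [partAppend_of_le hin.le, partAppend_of_le hin]
    exact hu.2.2 i hin
  · obtain ⟨j, rfl⟩ := Nat.exists_eq_add_of_le hni
    rw [partAppend_add hjoin, add_assoc, partAppend_add hjoin]
    exact hw.2.2 j (by omega)

theorem rieszSum_partAppend {E : Type*} [PseudoEMetricSpace E] (f : ℝ → E) (δ p : ℝ)
    (h : u n = w 0) :
    rieszSum f δ p (n + m) (partAppend n u w) = rieszSum f δ p n u + rieszSum f δ p m w := by
  unfold rieszSum
  rw [Finset.sum_range_add]
  congr 1
  · refine Finset.sum_congr rfl fun i hi => ?_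
    have hi := Finset.mem_range.1 hi
    rw [partAppend_of_le hi.le, partAppend_of_le hi]
  · refine Finset.sum_congr rfl fun i _ => ?_
    rw [add_assoc, partAppend_add h, partAppend_add h]

end partAppend

noncomputable def rieszSup {E : Type*} [PseudoEMetricSpace E] (f : ℝ → E) (δ p : ℝ)
    (s t : ℝ) : ℝ≥0∞ :=
  ⨆ n, ⨆ u, ⨆ _ : IsPart s t n u, rieszSum f δ p n u

section rieszSup

variable {E : Type*} [PseudoEMetricSpace E] (f : ℝ → E) (δ p : ℝ) {r s t : ℝ}

theorem rieszSum_le_rieszSup {n : ℕ} {u : ℕ → ℝ} (h : IsPart s t n u) :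
    rieszSum f δ p n u ≤ rieszSup f δ p s t :=
  le_iSup_of_le n <| le_iSup_of_le u <| le_iSup_of_le h le_rfl

theorem rieszSup_eq_iSup_prod :
    rieszSup f δ p s t =
      ⨆ q : ℕ × (ℕ → ℝ), ⨆ _ : IsPart s t q.1 q.2, rieszSum f δ p q.1 q.2 := by
  rw [rieszSup, iSup_prod]

theorem rieszSup_add_le (hrs : r ≤ s) (hst : s ≤ t) :
    rieszSup f δ p r s + rieszSup f δ p s t ≤ rieszSup f δ p r t := by
  rw [rieszSup_eq_iSup_prod, rieszSup_eq_iSup_prod]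
  obtain ⟨n, u, hu⟩ := IsPart.exists_of_le hrs
  obtain ⟨m, w, hw⟩ := IsPart.exists_of_le hst
  refine ENNReal.biSup_add_biSup_le' ⟨(n, u), hu⟩ ⟨(m, w), hw⟩ fun a ha b hb => ?_
  rw [← rieszSum_partAppend f δ p (ha.2.1.trans hb.1.symm)]
  exact rieszSum_le_rieszSup f δ p (ha.append hb)

theorem sum_rieszSup_le {n : ℕ} {u : ℕ → ℝ} (h : IsPart s t n u) :
    ∑ i ∈ Finset.range n, rieszSup f δ p (u i) (u (i + 1)) ≤ rieszSup f δ p s t := by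
  induction n generalizing t with
  | zero => simp
  | succ n ih =>
    rw [Finset.sum_range_succ, h.2.1]
    calc _ ≤ rieszSup f δ p s (u n) + rieszSup f δ p (u n) t := by gcongr; exact ih h.dropLast
      _ ≤ rieszSup f δ p s t :=
        rieszSup_add_le f δ p h.dropLast.le (h.2.1 ▸ (h.2.2 n n.lt_succ_self).le)

end rieszSup

section Comparison

variable {E : Type*} [PseudoEMetricSpace E] (f : ℝ → E) {δ p : ℝ} {s t : ℝ}

theorem edist_le_qVar {q : ℝ} (hq : 0 < q) (hst : s < t) :
    edist (f s) (f t) ≤ qVar f q s t := by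
  have hsum : edist (f s) (f t) ^ q ≤ ⨆ n, ⨆ u, ⨆ _ : IsPart s t n u,
      ∑ i ∈ Finset.range n, edist (f (u i)) (f (u (i + 1))) ^ q :=
    le_iSup_of_le 1 <| le_iSup_of_le _ <| le_iSup_of_le (IsPart.two_point hst) (by simp)
  calc edist (f s) (f t) = (edist (f s) (f t) ^ q) ^ (1 / q) := by
        rw [← ENNReal.rpow_mul, mul_one_div_cancel hq.ne', ENNReal.rpow_one]
    _ ≤ qVar f q s t := ENNReal.rpow_le_rpow hsum (by positivity)

theorem VNorm_le_tildeVNorm (hδ : 0 < δ) (hp : 0 ≤ p) :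
    VNorm f δ p s t ≤ tildeVNorm f δ p s t := by
  refine ENNReal.rpow_le_rpow (iSup_mono fun n => iSup_mono fun u => iSup_mono fun hu => ?_)
    (by positivity)
  refine Finset.sum_le_sum fun i hi => ?_
  gcongr
  exact edist_le_qVar f (one_div_pos.2 hδ) (hu.2.2 i (Finset.mem_range.1 hi))

end Comparison

theorem ENNReal.mul_div_rpow_eq_rpow_div_rpow_sub_one {x Δ : ℝ≥0∞} {P : ℝ} (hP : 0 ≤ P)
    (hΔ₀ : Δ ≠ 0) (hΔ : Δ ≠ ⊤) : Δ * (x / Δ) ^ P = x ^ P / Δ ^ (P - 1) := by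
  have hsplit : Δ ^ P = Δ * Δ ^ (P - 1) := by
    conv_lhs => rw [← add_sub_cancel 1 P]
    rw [ENNReal.rpow_add _ _ hΔ₀ hΔ, ENNReal.rpow_one]
  rw [ENNReal.div_rpow_of_nonneg _ _ hP, hsplit, ← mul_div_assoc,
    ENNReal.mul_div_mul_left _ _ hΔ₀ hΔ]

section Holder

variable {E : Type*} [PseudoEMetricSpace E] (f : ℝ → E) {δ p : ℝ} {s t : ℝ}

/-- Hölder's inequality with the weights `u (i + 1) - u i`, whose sum is `t - s`. -/
theorem IsPart.sum_edist_rpow_le {n : ℕ} {u : ℕ → ℝ} (hu : IsPart s t n u) (hδ : 0 < δ)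
    (hP : 1 ≤ δ * p) :
    ∑ i ∈ Finset.range n, edist (f (u i)) (f (u (i + 1))) ^ (1 / δ) ≤
      ENNReal.ofReal (t - s) ^ (1 - (δ * p)⁻¹) * rieszSum f δ p n u ^ (δ * p)⁻¹ := by
  set Δ : ℕ → ℝ≥0∞ := fun i => ENNReal.ofReal (u (i + 1) - u i)
  set d : ℕ → ℝ≥0∞ := fun i => edist (f (u i)) (f (u (i + 1))) ^ (1 / δ)
  have hΔ₀ : ∀ i ∈ Finset.range n, Δ i ≠ 0 := fun i hi =>
    (ENNReal.ofReal_pos.2 (sub_pos.2 (hu.2.2 i (Finset.mem_range.1 hi)))).ne'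
  have hterm : ∀ i ∈ Finset.range n, Δ i * (d i / Δ i) ^ (δ * p) =
      edist (f (u i)) (f (u (i + 1))) ^ p / Δ i ^ (δ * p - 1) := by
    intro i hi
    rw [ENNReal.mul_div_rpow_eq_rpow_div_rpow_sub_one (by linarith) (hΔ₀ i hi)
      ENNReal.ofReal_ne_top, ← ENNReal.rpow_mul, one_div_mul_eq_div,
      mul_div_cancel_left₀ p hδ.ne']
  calc ∑ i ∈ Finset.range n, d i = ∑ i ∈ Finset.range n, Δ i * (d i / Δ i) :=
        Finset.sum_congr rfl fun i hi =>
          (ENNReal.mul_div_cancel (hΔ₀ i hi) ENNReal.ofReal_ne_top).symm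
    _ ≤ (∑ i ∈ Finset.range n, Δ i) ^ (1 - (δ * p)⁻¹) *
          (∑ i ∈ Finset.range n, Δ i * (d i / Δ i) ^ (δ * p)) ^ (δ * p)⁻¹ :=
        ENNReal.inner_le_weight_mul_Lp_of_nonneg _ hP _ _
    _ = _ := by rw [hu.sum_ofReal_sub, Finset.sum_congr rfl hterm]; rfl

theorem qVar_rpow_div_le_rieszSup (hδ : 0 < δ) (hP : 1 ≤ δ * p) :
    qVar f (1 / δ) s t ^ p / ENNReal.ofReal (t - s) ^ (δ * p - 1) ≤ rieszSup f δ p s t := by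
  set D := ENNReal.ofReal (t - s)
  set R := rieszSup f δ p s t
  set S := ⨆ n, ⨆ u, ⨆ _ : IsPart s t n u,
    ∑ i ∈ Finset.range n, edist (f (u i)) (f (u (i + 1))) ^ (1 / δ)
  have hP₀ : 0 < δ * p := by linarith
  have hS : S ≤ D ^ (1 - (δ * p)⁻¹) * R ^ (δ * p)⁻¹ :=
    iSup_le fun n => iSup_le fun u => iSup_le fun hu => (hu.sum_edist_rpow_le f hδ hP).trans
      (by gcongr; exact rieszSum_le_rieszSup f δ p hu)
  have hqVar : qVar f (1 / δ) s t ^ p = S ^ (δ * p) := by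
    rw [qVar, one_div_one_div, ← ENNReal.rpow_mul]
  refine ENNReal.div_le_of_le_mul ?_
  calc qVar f (1 / δ) s t ^ p = S ^ (δ * p) := hqVar
    _ ≤ (D ^ (1 - (δ * p)⁻¹) * R ^ (δ * p)⁻¹) ^ (δ * p) :=
        ENNReal.rpow_le_rpow hS hP₀.le
    _ = R * D ^ (δ * p - 1) := by
      rw [ENNReal.mul_rpow_of_nonneg _ _ hP₀.le, ← ENNReal.rpow_mul, ← ENNReal.rpow_mul,
        inv_mul_cancel₀ hP₀.ne', ENNReal.rpow_one, sub_mul, one_mul,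
        inv_mul_cancel₀ hP₀.ne', mul_comm]

theorem tildeVNorm_le_VNorm (hδ : 0 < δ) (hP : 1 ≤ δ * p) :
    tildeVNorm f δ p s t ≤ VNorm f δ p s t := by
  have hp : 0 < p := pos_of_mul_pos_right (by linarith) hδ.le
  refine ENNReal.rpow_le_rpow (iSup_le fun n => iSup_le fun u => iSup_le fun hu => ?_)
    (by positivity)
  calc _ ≤ ∑ i ∈ Finset.range n, rieszSup f δ p (u i) (u (i + 1)) :=
        Finset.sum_le_sum fun i _ => qVar_rpow_div_le_rieszSup f hδ hP
    _ ≤ rieszSup f δ p s t := sum_rieszSup_le f δ p hu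

end Holder

theorem rieszDistance_equiv_mixedDistance_general {E : Type*} [NormedAddCommGroup E] (δ p : ℝ)
    (hδ : 0 < δ) (hp : 1 < p) (hδp : 1 / p < δ) :
    ∃ c C : ℝ, 0 < c ∧ 0 < C ∧
      ∀ (T : ℝ) (X₁ X₂ : ℝ → E), 0 < T →
        ContinuousOn X₁ (Set.Icc 0 T) → ContinuousOn X₂ (Set.Icc 0 T) →
        ENNReal.ofReal c * VNorm (fun r => X₁ r - X₂ r) δ p 0 T ≤
            tildeVNorm (fun r => X₁ r - X₂ r) δ p 0 T ∧
          tildeVNorm (fun r => X₁ r - X₂ r) δ p 0 T ≤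
            ENNReal.ofReal C * VNorm (fun r => X₁ r - X₂ r) δ p 0 T := by
  have hp₀ : 0 < p := one_pos.trans hp
  have hP : 1 ≤ δ * p := ((div_lt_iff₀ hp₀).1 hδp).le
  refine ⟨1, 1, one_pos, one_pos, fun T X₁ X₂ _ _ _ => ?_⟩
  simp only [ENNReal.ofReal_one, one_mul]
  exact ⟨VNorm_le_tildeVNorm _ hδ hp₀.le, tildeVNorm_le_VNorm _ hδ hP⟩

/-- equivalence of the (first-level) inhomogeneous Riesz type distance
and the inhomogeneous mixed Hölder-variation distance, applied to the difference path. -/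
theorem rieszDistance_equiv_mixedDistance {E : Type*} [NormedAddCommGroup E] (δ p : ℝ)
    (hδ : 0 < δ) (hδ1 : δ < 1) (hp : 1 < p) (hδp : 1 / p < δ) :
    ∃ c C : ℝ, 0 < c ∧ 0 < C ∧
      ∀ (T : ℝ) (X₁ X₂ : ℝ → E), 0 < T →
        ContinuousOn X₁ (Set.Icc 0 T) → ContinuousOn X₂ (Set.Icc 0 T) →
        ENNReal.ofReal c * VNorm (fun r => X₁ r - X₂ r) δ p 0 T ≤
            tildeVNorm (fun r => X₁ r - X₂ r) δ p 0 T ∧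
          tildeVNorm (fun r => X₁ r - X₂ r) δ p 0 T ≤
            ENNReal.ofReal C * VNorm (fun r => X₁ r - X₂ r) δ p 0 T :=
  rieszDistance_equiv_mixedDistance_general δ p hδ hp hδp
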